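/- In the NFA-emptiness-to-typechecking reduction, the constructed transducer outputs an 'accept'-labeled leaf on input r(a₁(a₂(⋯(aₙ(#))⋯))) if and only if the NFA N accepts the string a₁a₂⋯aₙ. Specifically, let N = (Q_N, {0,1}, δ_N, {q⁰_N}, F_N) be an NFA and T the transducer with rules (q⁰_T, r) → r(q⁰_N); (q, a) → a(q¹ q²) when δ_N(q,a) = {q¹,q²} (with q¹ = q² allowed when the set is a singleton); (q,a) → error when δ_N(q,a) = ∅; (q,#) → accept if q ∈ F_N and (q,#) → error otherwise. Then for every string w ∈ {0,1}*, the output tree T(r(w(#))) contains a leaf labeled 'accept' iff w ∈ L(N), where r(w(#)) denotes the unary tree with spine r, then the letters of w, then #. -/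

import Mathlib

/-- Unranked trees over alphabet `σ`. -/
inductive UTree (σ : Type) : Type where
  | node (a : σ) (ts : List (UTree σ)) : UTree σ

/-- The root label of a tree. -/
def UTree.root {σ : Type} : UTree σ → σ
  | .node a _ => a

/-- Trees over `Σ ∪ Q` where states from `Q` may occur (at leaves): the building blocks of
right-hand sides of transducer rules. -/
inductive TTree (σ Q : Type) : Type where
  | node (a : σ) (ts : List (TTree σ Q)) : TTree σ Q
  | state (p : Q) : TTree σ Q

/-- The (deterministic) rule set of a tree transducer: `R q a = some h` means there is a
rule `(q,a) → h`, `none` means no rule for `(q,a)`. -/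
abbrev Rules (σ Q : Type) := Q → σ → Option (List (TTree σ Q))

/-- Substitute each state-labeled leaf `p` of an rhs-tree by the hedge `f p`. -/
def TTree.subst {σ Q : Type} (f : Q → List (UTree σ)) : TTree σ Q → List (UTree σ)
  | .state p => f p
  | .node a cs => [.node a (cs.attach.flatMap fun c => c.1.subst f)]
termination_by t => sizeOf t
decreasing_by
  have := List.sizeOf_lt_of_mem c.2
  simp only [TTree.node.sizeOf_spec]
  omega

/-- The translation `T^q(t)` of a tree `t` in state `q`: take `rhs(q,a)` and replace every
state-labeled leaf `p` by the hedge `T^p(t₁)⋯T^p(tₙ)`; it is `ε` (the empty hedge) when no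
rule applies. -/
def applyT {σ Q : Type} (R : Rules σ Q) : Q → UTree σ → List (UTree σ)
  | q, .node a ts =>
    match R q a with
    | none => []
    | some h =>
        h.flatMap (TTree.subst fun p => ts.attach.flatMap fun t => applyT R p t.1)
termination_by q t => sizeOf t
decreasing_by
  have := List.sizeOf_lt_of_mem t.2
  simp only [UTree.node.sizeOf_spec]
  omega

/-- Whether an rhs-tree is a bare state. -/
def TTree.isState {σ Q : Type} : TTree σ Q → Prop
  | .state _ => True
  | .node _ _ => False

/-- A transducer is non-deleting if no state occurs at the top level of any rhs. -/
def NonDeleting {σ Q : Type} (R : Rules σ Q) : Prop :=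
  ∀ q a h, R q a = some h → ∀ x ∈ h, ¬ x.isState

/-- The top label of an rhs-tree, if it is not a state. -/
def TTree.topLabel {σ Q : Type} : TTree σ Q → Option σ
  | .node a _ => some a
  | .state _ => none

/-- Occurrence of a label `a` in a tree. -/
inductive LOcc {σ : Type} (a : σ) : UTree σ → Prop where
  | root (ts : List (UTree σ)) : LOcc a (.node a ts)
  | child (b : σ) (ts : List (UTree σ)) (t : UTree σ) :
      t ∈ ts → LOcc a t → LOcc a (.node b ts)

/-- The output alphabet of the reduction: `r`, the letters `0`, `1`, the end marker `#`,
and the symbols `error` and `accept`. -/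
inductive Sig : Type where
  | r | zero | one | hash | error | accept
deriving DecidableEq

/-- The label corresponding to a letter of `{0,1}`. -/
def lbl : Bool → Sig
  | false => .zero
  | true => .one

/-- Acceptance of an NFA `(Q, {0,1}, δ, {q₀}, F)` (successor sets given as lists) from a
state: the empty word is accepted iff the state is final; `a·w` is accepted iff some
`δ`-successor accepts `w`. -/
def NAcc {Q : Type} (δ : Q → Bool → List Q) (F : Q → Bool) : Q → List Bool → Prop
  | q, [] => F q = true
  | q, a :: w => ∃ q' ∈ δ q a, NAcc δ F q' w

/-- The rules of the reduction's transducer. State `none` is the initial state `q⁰_T`;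
state `some q` simulates NFA state `q`. `(q⁰_T, r) → r(q⁰_N)`;
`(q, a) → a(q¹ ⋯ qᵏ)` where `{q¹,…,qᵏ} = δ_N(q,a) ≠ ∅`; `(q, a) → error` if `δ_N(q,a) = ∅`;
`(q, #) → accept` if `q ∈ F_N` and `(q, #) → error` otherwise. -/
def nfaRules {Q : Type} [DecidableEq Q] (δ : Q → Bool → List Q) (F : Q → Bool) (q0 : Q) :
    Rules Sig (Option Q)
  | none, .r => some [.node .r [.state (some q0)]]
  | some q, .zero =>
      if δ q false = [] then some [.node .error []]
      else some [.node .zero ((δ q false).map fun q' => .state (some q'))]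
  | some q, .one =>
      if δ q true = [] then some [.node .error []]
      else some [.node .one ((δ q true).map fun q' => .state (some q'))]
  | some q, .hash => some [.node (if F q then .accept else .error) []]
  | _, _ => none

/-- The unary spine `a₁(a₂(⋯(aₙ(#))⋯))` encoding the string `a₁⋯aₙ ∈ {0,1}*`. -/
def spine : List Bool → UTree Sig
  | [] => .node .hash []
  | a :: w => .node (lbl a) [spine w]

/-- The input tree `r(a₁(a₂(⋯(aₙ(#))⋯)))`. -/
def inputTree (w : List Bool) : UTree Sig := .node .r [spine w]

theorem LOcc.node_iff {σ : Type} {a b : σ} {ts : List (UTree σ)} :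
    LOcc a (.node b ts) ↔ a = b ∨ ∃ t ∈ ts, LOcc a t := by
  constructor
  · rintro (_ | ⟨_, _, t, ht, hocc⟩)
    · exact .inl rfl
    · exact .inr ⟨t, ht, hocc⟩
  · rintro (rfl | ⟨t, ht, hocc⟩)
    · exact .root ts
    · exact .child b ts t ht hocc

theorem LOcc.node_iff_of_ne {σ : Type} {a b : σ} (hab : a ≠ b) {ts : List (UTree σ)} :
    LOcc a (.node b ts) ↔ ∃ t ∈ ts, LOcc a t := by
  simp [LOcc.node_iff, hab]

theorem TTree.subst_state {σ Q : Type} (f : Q → List (UTree σ)) (p : Q) :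
    (TTree.state p).subst f = f p := by
  rw [TTree.subst]

theorem TTree.subst_node {σ Q : Type} (f : Q → List (UTree σ)) (a : σ)
    (cs : List (TTree σ Q)) :
    (TTree.node a cs).subst f = [.node a (cs.flatMap (·.subst f))] := by
  simp only [TTree.subst.eq_2, List.flatMap_subtype, List.unattach_attach]

theorem applyT_of_rule {σ Q : Type} {R : Rules σ Q} {q : Q} {a : σ} {rhs : List (TTree σ Q)}
    (hrule : R q a = some rhs) (ts : List (UTree σ)) :
    applyT R q (.node a ts) = rhs.flatMap (TTree.subst fun p => ts.flatMap (applyT R p)) := by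
  rw [applyT, hrule]
  simp only [List.flatMap_subtype, List.unattach_attach]

section NfaRules

variable {Q : Type} [DecidableEq Q] (δ : Q → Bool → List Q) (F : Q → Bool) (q0 : Q)

theorem nfaRules_some_lbl (q : Q) (a : Bool) :
    nfaRules δ F q0 (some q) (lbl a) =
      if δ q a = [] then some [.node .error []]
      else some [.node (lbl a) ((δ q a).map fun q' => .state (some q'))] := by
  cases a <;> rfl

theorem applyT_nfaRules_spine_nil (q : Q) :
    applyT (nfaRules δ F q0) (some q) (spine []) =
      [.node (if F q then .accept else .error) []] := by
  rw [spine, applyT_of_rule rfl]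
  simp [TTree.subst_node]

theorem applyT_nfaRules_spine_cons (q : Q) (a : Bool) (w : List Bool) :
    applyT (nfaRules δ F q0) (some q) (spine (a :: w)) =
      if δ q a = [] then [.node .error []]
      else [.node (lbl a)
        ((δ q a).flatMap fun q' => applyT (nfaRules δ F q0) (some q') (spine w))] := by
  rw [spine]
  split_ifs with hnil
  · rw [applyT_of_rule (by rw [nfaRules_some_lbl, if_pos hnil])]
    simp [TTree.subst_node]
  · rw [applyT_of_rule (by rw [nfaRules_some_lbl, if_neg hnil])]
    simp [TTree.subst_node, TTree.subst_state, List.flatMap_map]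

theorem applyT_nfaRules_inputTree (w : List Bool) :
    applyT (nfaRules δ F q0) none (inputTree w) =
      [.node .r (applyT (nfaRules δ F q0) (some q0) (spine w))] := by
  rw [inputTree, applyT_of_rule rfl]
  simp [TTree.subst_node, TTree.subst_state]

/-- The output has one branch per run of `N` from `q` on `w`, and a branch ends in `accept`
exactly when its run is accepting. -/
theorem exists_accept_applyT_nfaRules_spine_iff (w : List Bool) (q : Q) :
    (∃ t ∈ applyT (nfaRules δ F q0) (some q) (spine w), LOcc Sig.accept t) ↔
      NAcc δ F q w := by
  induction w generalizing q with
  | nil =>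
    cases hF : F q <;> simp [applyT_nfaRules_spine_nil, hF, NAcc, LOcc.node_iff]
  | cons a w ih =>
    rw [applyT_nfaRules_spine_cons, NAcc]
    have hlbl : Sig.accept ≠ lbl a := by cases a <;> decide
    split_ifs with hnil
    · simp [hnil, LOcc.node_iff]
    · simp only [List.mem_singleton, exists_eq_left, LOcc.node_iff_of_ne hlbl, List.mem_flatMap]
      constructor
      · rintro ⟨t, ⟨q', hq', ht⟩, hocc⟩
        exact ⟨q', hq', (ih q').mp ⟨t, ht, hocc⟩⟩
      · rintro ⟨q', hq', hacc⟩
        obtain ⟨t, ht, hocc⟩ := (ih q').mpr hacc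
        exact ⟨t, ⟨q', hq', ht⟩, hocc⟩

end NfaRules

/-- the constructed transducer outputs an `accept`-labeled leaf on input
`r(a₁(⋯(aₙ(#))⋯))` iff the NFA `N` accepts `a₁⋯aₙ`. -/
theorem nfa_transducer_reduction {Q : Type} [DecidableEq Q] (δ : Q → Bool → List Q) (F : Q → Bool)
    (q0 : Q) (w : List Bool) :
    (∃ t ∈ applyT (nfaRules δ F q0) none (inputTree w), LOcc Sig.accept t) ↔
      NAcc δ F q0 w := by
  rw [applyT_nfaRules_inputTree]
  simp only [List.mem_singleton, exists_eq_left,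
    LOcc.node_iff_of_ne (show Sig.accept ≠ Sig.r by decide)]
  exact exists_accept_applyT_nfaRules_spine_iff δ F q0 w q0
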